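/- (Continuity, Lemma 5, concrete form.) Let d ≥ 1, ν > 0, let a : ℝ^d → ℝ^d be a smooth vector field with ∇·a = 0, and let τ_M : ℝ^d → ℝ be continuous with τ_M > 0 pointwise. Let w, v : ℝ^d → ℝ^d be smooth compactly supported vector fields with ∇·w = 0 and ∇·v = 0, and let r, q : ℝ^d → ℝ be smooth and compactly supported. Then A_red((w,r),(v,q)) ≤ 3 |||(w,r)|||₊ · |||(v,q)|||, where |||(v,q)|||² = k(v,v) + ∫_{ℝ^d} τ_M |a·∇v + ∇q|² dx and |||(w,r)|||₊² = |||(w,r)|||² + ∫_{ℝ^d} τ_M |∇·(2ν∇ˢw)|² dx + ∫_{ℝ^d} τ_M⁻¹ |w|² dx. -/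

import Mathlib

open MeasureTheory

noncomputable section

variable {d : ℕ}

/-- Partial derivative `∂_j f` of a scalar field. -/
def pder (f : (Fin d → ℝ) → ℝ) (j : Fin d) (x : Fin d → ℝ) : ℝ :=
  fderiv ℝ f x (Pi.single j 1)

/-- Divergence `∇·v` of a vector field. -/
def vdiv (v : (Fin d → ℝ) → Fin d → ℝ) (x : Fin d → ℝ) : ℝ :=
  ∑ i, pder (fun y => v y i) i x

/-- `(a·∇v)_i = ∑_j a_j ∂_j v_i`. -/
def adv (a v : (Fin d → ℝ) → Fin d → ℝ) (x : Fin d → ℝ) (i : Fin d) : ℝ :=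
  ∑ j, a x j * pder (fun y => v y i) j x

/-- Gradient `(∇q)_i` of a scalar field. -/
def grd (q : (Fin d → ℝ) → ℝ) (x : Fin d → ℝ) (i : Fin d) : ℝ :=
  pder q i x

/-- Symmetrized gradient `(∇ˢv)_{ij} = (∂_j v_i + ∂_i v_j)/2`. -/
def symGrad (v : (Fin d → ℝ) → Fin d → ℝ) (x : Fin d → ℝ) (i j : Fin d) : ℝ :=
  (pder (fun y => v y i) j x + pder (fun y => v y j) i x) / 2

/-- `(∇·(2ν∇ˢv))_i`, the row-wise divergence of the viscous stress. -/
def divVisc (ν : ℝ) (v : (Fin d → ℝ) → Fin d → ℝ) (x : Fin d → ℝ) (i : Fin d) : ℝ :=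
  ∑ j, pder (fun y => 2 * ν * symGrad v y i j) j x

/-- Convection form `c(a,v₁,v₂) = ∫ (a·∇v₁)·v₂`. -/
def convc (a v₁ v₂ : (Fin d → ℝ) → Fin d → ℝ) : ℝ :=
  ∫ x, ∑ i, adv a v₁ x i * v₂ x i

/-- Conservative convection form `c_cons(a,v₁,v₂) = −∫ v₁·(a·∇v₂)`. -/
def convcons (a v₁ v₂ : (Fin d → ℝ) → Fin d → ℝ) : ℝ :=
  -∫ x, ∑ i, v₁ x i * adv a v₂ x i

/-- Skew convection form `c_skew = (c + c_cons)/2`. -/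
def convskew (a v₁ v₂ : (Fin d → ℝ) → Fin d → ℝ) : ℝ :=
  (convc a v₁ v₂ + convcons a v₁ v₂) / 2

/-- Viscous form `k(v₁,v₂) = ∫ 2ν ∇ˢv₁ : ∇ˢv₂`. -/
def kvisc (ν : ℝ) (v₁ v₂ : (Fin d → ℝ) → Fin d → ℝ) : ℝ :=
  ∫ x, ∑ i, ∑ j, 2 * ν * symGrad v₁ x i j * symGrad v₂ x i j

/-- Reduced Oseen form `A_red((w,r),(v,q))`. -/
def Ared (ν : ℝ) (a : (Fin d → ℝ) → Fin d → ℝ) (τ : (Fin d → ℝ) → ℝ)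
    (w : (Fin d → ℝ) → Fin d → ℝ) (r : (Fin d → ℝ) → ℝ)
    (v : (Fin d → ℝ) → Fin d → ℝ) (q : (Fin d → ℝ) → ℝ) : ℝ :=
  convc a w v + kvisc ν w v +
    ∫ x, τ x * ∑ i, (adv a w x i - divVisc ν w x i + grd r x i) * (adv a v x i + grd q x i)

/-- `|||(v,q)|||² = k(v,v) + ∫ τ_M |a·∇v + ∇q|²`. -/
def tnormSq (ν : ℝ) (a : (Fin d → ℝ) → Fin d → ℝ) (τ : (Fin d → ℝ) → ℝ)
    (v : (Fin d → ℝ) → Fin d → ℝ) (q : (Fin d → ℝ) → ℝ) : ℝ :=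
  kvisc ν v v + ∫ x, τ x * ∑ i, (adv a v x i + grd q x i) ^ 2

/-- `|||(v,q)|||`. -/
def tnorm (ν : ℝ) (a : (Fin d → ℝ) → Fin d → ℝ) (τ : (Fin d → ℝ) → ℝ)
    (v : (Fin d → ℝ) → Fin d → ℝ) (q : (Fin d → ℝ) → ℝ) : ℝ :=
  Real.sqrt (tnormSq ν a τ v q)

/-- `|||(v,q)|||₊² = |||(v,q)|||² + ∫ τ_M |∇·(2ν∇ˢv)|² + ∫ τ_M⁻¹ |v|²`. -/
def tnormPlusSq (ν : ℝ) (a : (Fin d → ℝ) → Fin d → ℝ) (τ : (Fin d → ℝ) → ℝ)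
    (v : (Fin d → ℝ) → Fin d → ℝ) (q : (Fin d → ℝ) → ℝ) : ℝ :=
  tnormSq ν a τ v q + (∫ x, τ x * ∑ i, (divVisc ν v x i) ^ 2)
    + ∫ x, (τ x)⁻¹ * ∑ i, (v x i) ^ 2

/-- `|||(v,q)|||₊`. -/
def tnormPlus (ν : ℝ) (a : (Fin d → ℝ) → Fin d → ℝ) (τ : (Fin d → ℝ) → ℝ)
    (v : (Fin d → ℝ) → Fin d → ℝ) (q : (Fin d → ℝ) → ℝ) : ℝ :=
  Real.sqrt (tnormPlusSq ν a τ v q)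


section Helpers
variable {d : ℕ}

lemma contDiff_pder {f : (Fin d → ℝ) → ℝ} (hf : ContDiff ℝ (⊤ : ℕ∞) f) (j : Fin d) :
    ContDiff ℝ (⊤ : ℕ∞) (pder f j) :=
  (hf.fderiv_right (by simp)).clm_apply contDiff_const

lemma hcs_pder {f : (Fin d → ℝ) → ℝ} (hf : HasCompactSupport f) (j : Fin d) :
    HasCompactSupport (pder f j) :=
  hf.fderiv_apply ℝ _

lemma hcs_comp {w : (Fin d → ℝ) → Fin d → ℝ} (hw : HasCompactSupport w) (i : Fin d) :
    HasCompactSupport (fun x => w x i) :=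
  hw.comp_left (g := fun y : Fin d → ℝ => y i) rfl

lemma hcs_sum {ι : Type*} (s : Finset ι) (f : ι → (Fin d → ℝ) → ℝ)
    (h : ∀ i ∈ s, HasCompactSupport (f i)) :
    HasCompactSupport (fun x => ∑ i ∈ s, f i x) := by
  classical
  induction s using Finset.induction_on with
  | empty => simp only [Finset.sum_empty]; exact HasCompactSupport.zero
  | insert _ _ hns ih =>
    rename_i a s
    simp only [Finset.sum_insert hns]
    exact (h a (Finset.mem_insert_self a s)).add
      (ih fun i hi => h i (Finset.mem_insert_of_mem hi))

lemma hcs_mul_left {f : (Fin d → ℝ) → ℝ} (c : (Fin d → ℝ) → ℝ) (hf : HasCompactSupport f) :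
    HasCompactSupport (fun x => c x * f x) :=
  HasCompactSupport.mul_left hf

lemma hcs_mul_right {f : (Fin d → ℝ) → ℝ} (c : (Fin d → ℝ) → ℝ) (hf : HasCompactSupport f) :
    HasCompactSupport (fun x => f x * c x) :=
  HasCompactSupport.mul_right hf

lemma hcs_sq {f : (Fin d → ℝ) → ℝ} (hf : HasCompactSupport f) :
    HasCompactSupport (fun x => f x ^ 2) := by
  have h : (fun x => f x ^ 2) = fun x => f x * f x := by funext x; ring
  rw [h]; exact hcs_mul_right f hf

lemma hcs_neg {f : (Fin d → ℝ) → ℝ} (hf : HasCompactSupport f) :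
    HasCompactSupport (fun x => -(f x)) :=
  hf.comp_left (g := fun t : ℝ => -t) neg_zero

lemma integrable_cc {f : (Fin d → ℝ) → ℝ} (hf : Continuous f) (hfc : HasCompactSupport f) :
    MeasureTheory.Integrable f :=
  hf.integrable_of_hasCompactSupport hfc

lemma int_congr {f g : (Fin d → ℝ) → ℝ} (h : ∀ x, f x = g x) : ∫ x, f x = ∫ x, g x :=
  congrArg _ (funext h)

lemma pder_mul {f g : (Fin d → ℝ) → ℝ} (hf : ContDiff ℝ (⊤ : ℕ∞) f) (hg : ContDiff ℝ (⊤ : ℕ∞) g)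
    (j : Fin d) (x : Fin d → ℝ) :
    pder (fun y => f y * g y) j x = pder f j x * g x + f x * pder g j x := by
  unfold pder
  rw [fderiv_fun_mul (hf.differentiable (by simp) x) (hg.differentiable (by simp) x)]
  simp only [ContinuousLinearMap.add_apply, ContinuousLinearMap.smul_apply, smul_eq_mul]
  ring

lemma ibp {f g : (Fin d → ℝ) → ℝ} (hf : ContDiff ℝ (⊤ : ℕ∞) f) (hg : ContDiff ℝ (⊤ : ℕ∞) g)
    (hgc : HasCompactSupport g) (j : Fin d) :
    ∫ x, f x * pder g j x = - ∫ x, pder f j x * g x := by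
  have h1 : Integrable (fun x => pder f j x * g x) :=
    (((contDiff_pder hf j).continuous).mul hg.continuous).integrable_of_hasCompactSupport
      (HasCompactSupport.mul_left hgc)
  have h2 : Integrable (fun x => f x * pder g j x) :=
    ((hf.continuous).mul (contDiff_pder hg j).continuous).integrable_of_hasCompactSupport
      (HasCompactSupport.mul_left (hcs_pder hgc j))
  have h3 : Integrable (fun x => f x * g x) :=
    ((hf.continuous).mul hg.continuous).integrable_of_hasCompactSupport
      (HasCompactSupport.mul_left hgc)
  exact integral_mul_fderiv_eq_neg_fderiv_mul_of_integrable h1 h2 h3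
    (fun x _ => hf.differentiable (by simp) x) (fun x _ => hg.differentiable (by simp) x)

lemma cs_scalar {f g : (Fin d → ℝ) → ℝ}
    (hf2 : Integrable (fun x => f x ^ 2)) (hg2 : Integrable (fun x => g x ^ 2))
    (hfg : Integrable (fun x => f x * g x)) :
    ∫ x, f x * g x ≤ Real.sqrt (∫ x, f x ^ 2) * Real.sqrt (∫ x, g x ^ 2) := by
  set A := ∫ x, f x ^ 2 with hA
  set B := ∫ x, g x ^ 2 with hB
  set C := ∫ x, f x * g x with hC
  have hA0 : 0 ≤ A := integral_nonneg fun x => sq_nonneg _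
  have hB0 : 0 ≤ B := integral_nonneg fun x => sq_nonneg _
  have key : ∀ t : ℝ, 0 ≤ A * (t * t) + (2 * C) * t + B := by
    intro t
    have h0 : 0 ≤ ∫ x, (t * f x + g x) ^ 2 := integral_nonneg fun x => sq_nonneg _
    have heq : (∫ x, (t * f x + g x) ^ 2) = A * (t * t) + (2 * C) * t + B := by
      have h : (fun x => (t * f x + g x) ^ 2)
          = fun x => (t * t) * (f x ^ 2) + ((2 * t) * (f x * g x) + g x ^ 2) := by
        funext x; ring
      have i1 : Integrable (fun x => 2 * t * (f x * g x) + g x ^ 2) :=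
        (hfg.const_mul (2*t)).add hg2
      rw [h]
      rw [integral_add (hf2.const_mul (t*t)) i1,
        integral_add (hfg.const_mul (2*t)) hg2, MeasureTheory.integral_const_mul,
        MeasureTheory.integral_const_mul]
      ring
    linarith [heq ▸ h0]
  have hd := discrim_le_zero key
  rw [discrim] at hd
  have hC2 : C ^ 2 ≤ A * B := by nlinarith
  calc C ≤ |C| := le_abs_self C
    _ = Real.sqrt (C ^ 2) := (Real.sqrt_sq_eq_abs C).symm
    _ ≤ Real.sqrt (A * B) := Real.sqrt_le_sqrt hC2
    _ = Real.sqrt A * Real.sqrt B := Real.sqrt_mul hA0 B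

lemma sqrt_cs2 {a b c e : ℝ} (ha : 0 ≤ a) (hb : 0 ≤ b) (hc : 0 ≤ c) (he : 0 ≤ e) :
    Real.sqrt a * Real.sqrt c + Real.sqrt b * Real.sqrt e
      ≤ Real.sqrt (a + b) * Real.sqrt (c + e) := by
  have h1 : Real.sqrt a * Real.sqrt e * (Real.sqrt b * Real.sqrt c) ≤ (a*e + b*c)/2 := by
    nlinarith [sq_nonneg (Real.sqrt a * Real.sqrt e - Real.sqrt b * Real.sqrt c),
      Real.sq_sqrt ha, Real.sq_sqrt hb, Real.sq_sqrt hc, Real.sq_sqrt he]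
  nlinarith [Real.sq_sqrt ha, Real.sq_sqrt hb, Real.sq_sqrt hc, Real.sq_sqrt he,
    Real.sq_sqrt (add_nonneg ha hb), Real.sq_sqrt (add_nonneg hc he),
    Real.sqrt_nonneg a, Real.sqrt_nonneg b, Real.sqrt_nonneg c, Real.sqrt_nonneg e,
    Real.sqrt_nonneg (a+b), Real.sqrt_nonneg (c+e),
    sq_nonneg (Real.sqrt a * Real.sqrt c + Real.sqrt b * Real.sqrt e
      - Real.sqrt (a+b) * Real.sqrt (c+e)),
    mul_nonneg (Real.sqrt_nonneg (a+b)) (Real.sqrt_nonneg (c+e))]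

lemma cs_int {ι : Type*} [Fintype ι] {F G : (Fin d → ℝ) → ι → ℝ}
    (hFc : Continuous (fun x => ∑ i, F x i ^ 2)) (hGc : Continuous (fun x => ∑ i, G x i ^ 2))
    (h1 : Integrable (fun x => ∑ i, F x i ^ 2)) (h2 : Integrable (fun x => ∑ i, G x i ^ 2))
    (h3 : Integrable (fun x => ∑ i, F x i * G x i)) :
    ∫ x, ∑ i, F x i * G x i
      ≤ Real.sqrt (∫ x, ∑ i, F x i ^ 2) * Real.sqrt (∫ x, ∑ i, G x i ^ 2) := by
  set f : (Fin d → ℝ) → ℝ := fun x => Real.sqrt (∑ i, F x i ^ 2) with hfdef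
  set g : (Fin d → ℝ) → ℝ := fun x => Real.sqrt (∑ i, G x i ^ 2) with hgdef
  have hFnn : ∀ x, (0:ℝ) ≤ ∑ i, F x i ^ 2 := fun x => Finset.sum_nonneg fun i _ => sq_nonneg _
  have hGnn : ∀ x, (0:ℝ) ≤ ∑ i, G x i ^ 2 := fun x => Finset.sum_nonneg fun i _ => sq_nonneg _
  have hf2 : (fun x => f x ^ 2) = fun x => ∑ i, F x i ^ 2 :=
    funext fun x => Real.sq_sqrt (hFnn x)
  have hg2 : (fun x => g x ^ 2) = fun x => ∑ i, G x i ^ 2 :=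
    funext fun x => Real.sq_sqrt (hGnn x)
  have hfc : Continuous f := Real.continuous_sqrt.comp hFc
  have hgc : Continuous g := Real.continuous_sqrt.comp hGc
  have hfg_int : Integrable (fun x => f x * g x) := by
    refine Integrable.mono' ((h1.add h2).div_const 2) ((hfc.mul hgc).aestronglyMeasurable) ?_
    filter_upwards with x
    have h0 : (0:ℝ) ≤ f x * g x := mul_nonneg (Real.sqrt_nonneg _) (Real.sqrt_nonneg _)
    have e1 : f x ^ 2 = ∑ i, F x i ^ 2 := congrFun hf2 x
    have e2 : g x ^ 2 = ∑ i, G x i ^ 2 := congrFun hg2 x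
    simp only [Pi.add_apply]
    rw [Real.norm_eq_abs, abs_of_nonneg h0]
    nlinarith [sq_nonneg (f x - g x)]
  have hpt : ∀ x, ∑ i, F x i * G x i ≤ f x * g x := by
    intro x
    have hcs := Finset.sum_mul_sq_le_sq_mul_sq Finset.univ (F x) (G x)
    calc ∑ i, F x i * G x i ≤ |∑ i, F x i * G x i| := le_abs_self _
      _ = Real.sqrt ((∑ i, F x i * G x i) ^ 2) := (Real.sqrt_sq_eq_abs _).symm
      _ ≤ Real.sqrt ((∑ i, F x i ^ 2) * ∑ i, G x i ^ 2) := Real.sqrt_le_sqrt hcs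
      _ = f x * g x := Real.sqrt_mul (hFnn x) _
  calc ∫ x, ∑ i, F x i * G x i ≤ ∫ x, f x * g x := integral_mono h3 hfg_int hpt
    _ ≤ Real.sqrt (∫ x, f x ^ 2) * Real.sqrt (∫ x, g x ^ 2) := by
        refine cs_scalar ?_ ?_ hfg_int
        · rw [hf2]; exact h1
        · rw [hg2]; exact h2
    _ = _ := by rw [hf2, hg2]

end Helpers

section IBP2
variable {d : ℕ}

lemma contDiff_comp {w : (Fin d → ℝ) → Fin d → ℝ} (hw : ContDiff ℝ (⊤ : ℕ∞) w) (i : Fin d) :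
    ContDiff ℝ (⊤ : ℕ∞) (fun x => w x i) := contDiff_pi.mp hw i

/-- `∫ u · ∇p = 0` for divergence-free compactly supported `u` and compactly supported `p`. -/
lemma integral_dot_grad_eq_zero {u : (Fin d → ℝ) → Fin d → ℝ} {p : (Fin d → ℝ) → ℝ}
    (hu : ContDiff ℝ (⊤ : ℕ∞) u) (huc : HasCompactSupport u) (hdivu : ∀ x, vdiv u x = 0)
    (hp : ContDiff ℝ (⊤ : ℕ∞) p) (hpc : HasCompactSupport p) :
    ∫ x, ∑ i, u x i * pder p i x = 0 := by
  have hui : ∀ i, ContDiff ℝ (⊤ : ℕ∞) (fun x => u x i) := fun i => contDiff_comp hu i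
  have hint1 : ∀ i : Fin d, Integrable (fun x => u x i * pder p i x) := fun i =>
    integrable_cc ((hui i).continuous.mul (contDiff_pder hp i).continuous)
      (hcs_mul_left _ (hcs_pder hpc i))
  have hint2 : ∀ i : Fin d, Integrable (fun x => pder (fun y => u y i) i x * p x) := fun i =>
    integrable_cc ((contDiff_pder (hui i) i).continuous.mul hp.continuous)
      (hcs_mul_left _ hpc)
  calc ∫ x, ∑ i, u x i * pder p i x
      = ∑ i, ∫ x, u x i * pder p i x := integral_finset_sum _ fun i _ => hint1 i
    _ = ∑ i, -∫ x, pder (fun y => u y i) i x * p x :=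
        Finset.sum_congr rfl fun i _ => ibp (hui i) hp hpc i
    _ = -∑ i, ∫ x, pder (fun y => u y i) i x * p x := by rw [Finset.sum_neg_distrib]
    _ = -∫ x, ∑ i, pder (fun y => u y i) i x * p x :=
        congrArg Neg.neg (integral_finset_sum _ fun i _ => hint2 i).symm
    _ = 0 := by
        have h : ∀ x, ∑ i, pder (fun y => u y i) i x * p x = 0 := by
          intro x
          rw [← Finset.sum_mul]
          have : ∑ i, pder (fun y => u y i) i x = vdiv u x := rfl
          rw [this, hdivu x, zero_mul]
        rw [int_congr h, integral_zero, neg_zero]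

/-- Skew-symmetry of convection: `c(a,w,v) = -∫ w · (a·∇v)` when `∇·a = 0`. -/
lemma conv_swap {a w v : (Fin d → ℝ) → Fin d → ℝ}
    (ha : ContDiff ℝ (⊤ : ℕ∞) a) (hdiva : ∀ x, vdiv a x = 0)
    (hw : ContDiff ℝ (⊤ : ℕ∞) w) (hwc : HasCompactSupport w)
    (hv : ContDiff ℝ (⊤ : ℕ∞) v) (hvc : HasCompactSupport v) :
    convc a w v = - ∫ x, ∑ i, w x i * adv a v x i := by
  have hai : ∀ j, ContDiff ℝ (⊤ : ℕ∞) (fun x => a x j) := fun j => contDiff_comp ha j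
  have hwi : ∀ i, ContDiff ℝ (⊤ : ℕ∞) (fun x => w x i) := fun i => contDiff_comp hw i
  have hvi : ∀ i, ContDiff ℝ (⊤ : ℕ∞) (fun x => v x i) := fun i => contDiff_comp hv i
  -- the integrands
  set g : Fin d → Fin d → (Fin d → ℝ) → ℝ := fun i j x =>
    (pder (fun y => a y j) j x * v x i + a x j * pder (fun y => v y i) j x) * w x i with hg
  have hgint : ∀ i j, Integrable (g i j) := by
    intro i j
    refine integrable_cc ?_ (hcs_mul_left _ (hcs_comp hwc i))
    exact (((contDiff_pder (hai j) j).continuous.mul (hvi i).continuous).add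
      ((hai j).continuous.mul (contDiff_pder (hvi i) j).continuous)).mul (hwi i).continuous
  have hfint : ∀ i j, Integrable (fun x => (a x j * v x i) * pder (fun y => w y i) j x) := by
    intro i j
    exact integrable_cc (((hai j).continuous.mul (hvi i).continuous).mul
      (contDiff_pder (hwi i) j).continuous) (hcs_mul_left _ (hcs_pder (hcs_comp hwc i) j))
  have step1 : convc a w v = ∑ i, ∑ j, ∫ x, (a x j * v x i) * pder (fun y => w y i) j x := by
    unfold convc
    have h : ∀ x, ∑ i, adv a w x i * v x i
        = ∑ i, ∑ j, (a x j * v x i) * pder (fun y => w y i) j x := by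
      intro x
      refine Finset.sum_congr rfl fun i _ => ?_
      unfold adv
      rw [Finset.sum_mul]
      exact Finset.sum_congr rfl fun j _ => by ring
    rw [int_congr h]
    rw [integral_finset_sum _ fun i _ => integrable_finset_sum _ fun j _ => hfint i j]
    exact Finset.sum_congr rfl fun i _ =>
      integral_finset_sum _ fun j _ => hfint i j
  have step2 : ∀ i j, ∫ x, (a x j * v x i) * pder (fun y => w y i) j x = -∫ x, g i j x := by
    intro i j
    rw [ibp ((hai j).mul (hvi i)) (hwi i) (hcs_comp hwc i) j]
    refine congrArg Neg.neg (int_congr fun x => ?_)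
    rw [pder_mul (hai j) (hvi i) j x]
  have step3 : convc a w v = - ∫ x, ∑ i, ∑ j, g i j x := by
    rw [step1]
    rw [Finset.sum_congr rfl fun i _ => Finset.sum_congr rfl fun j _ => step2 i j]
    simp only [Finset.sum_neg_distrib]
    refine congrArg Neg.neg ?_
    rw [integral_finset_sum _ fun i _ => integrable_finset_sum _ fun j _ => hgint i j]
    exact (Finset.sum_congr rfl fun i _ => integral_finset_sum _ fun j _ => hgint i j).symm
  rw [step3]
  refine congrArg Neg.neg (int_congr fun x => ?_)
  have hi : ∀ i, ∑ j, g i j x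
      = (∑ j, pder (fun y => a y j) j x) * (v x i * w x i)
        + (∑ j, a x j * pder (fun y => v y i) j x) * w x i := by
    intro i
    rw [Finset.sum_mul, Finset.sum_mul, ← Finset.sum_add_distrib]
    refine Finset.sum_congr rfl fun j _ => ?_
    simp only [hg]
    ring
  calc ∑ i, ∑ j, g i j x
      = ∑ i, (vdiv a x * (v x i * w x i) + adv a v x i * w x i) :=
        Finset.sum_congr rfl fun i _ => hi i
    _ = ∑ i, w x i * adv a v x i := by
        refine Finset.sum_congr rfl fun i _ => ?_
        rw [hdiva x]
        ring
end IBP2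

section WCS
variable {d : ℕ}

lemma weighted_cs {τ : (Fin d → ℝ) → ℝ} (hτ : Continuous τ) (hτ0 : ∀ x, 0 < τ x)
    {F G : (Fin d → ℝ) → Fin d → ℝ}
    (hFcont : ∀ i, Continuous fun x => F x i) (hGcont : ∀ i, Continuous fun x => G x i)
    (hFcs : ∀ i, HasCompactSupport fun x => F x i)
    (hGcs : ∀ i, HasCompactSupport fun x => G x i) :
    ∫ x, τ x * ∑ i, F x i * G x i
      ≤ Real.sqrt (∫ x, τ x * ∑ i, F x i ^ 2) * Real.sqrt (∫ x, τ x * ∑ i, G x i ^ 2) := by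
  set F' : (Fin d → ℝ) → Fin d → ℝ := fun x i => Real.sqrt (τ x) * F x i with hF'
  set G' : (Fin d → ℝ) → Fin d → ℝ := fun x i => Real.sqrt (τ x) * G x i with hG'
  have hsτ : Continuous fun x => Real.sqrt (τ x) := Real.continuous_sqrt.comp hτ
  have hss : ∀ x, Real.sqrt (τ x) * Real.sqrt (τ x) = τ x :=
    fun x => Real.mul_self_sqrt (hτ0 x).le
  have eF2 : ∀ x, ∑ i, F' x i ^ 2 = τ x * ∑ i, F x i ^ 2 := by
    intro x
    rw [Finset.mul_sum]
    refine Finset.sum_congr rfl fun i _ => ?_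
    rw [hF']
    rw [mul_pow, sq, hss x]
  have eG2 : ∀ x, ∑ i, G' x i ^ 2 = τ x * ∑ i, G x i ^ 2 := by
    intro x
    rw [Finset.mul_sum]
    refine Finset.sum_congr rfl fun i _ => ?_
    rw [hG', mul_pow, sq, hss x]
  have eFG : ∀ x, ∑ i, F' x i * G' x i = τ x * ∑ i, F x i * G x i := by
    intro x
    rw [Finset.mul_sum]
    refine Finset.sum_congr rfl fun i _ => ?_
    rw [hF', hG']
    calc Real.sqrt (τ x) * F x i * (Real.sqrt (τ x) * G x i)
        = Real.sqrt (τ x) * Real.sqrt (τ x) * (F x i * G x i) := by ring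
      _ = τ x * (F x i * G x i) := by rw [hss x]
  have hF2cont : Continuous fun x => ∑ i, F' x i ^ 2 :=
    continuous_finset_sum _ fun i _ => ((hsτ.mul (hFcont i)).pow 2)
  have hG2cont : Continuous fun x => ∑ i, G' x i ^ 2 :=
    continuous_finset_sum _ fun i _ => ((hsτ.mul (hGcont i)).pow 2)
  have hF2int : Integrable (fun x => ∑ i, F' x i ^ 2) :=
    integrable_cc hF2cont (hcs_sum _ _ fun i _ => hcs_sq (hcs_mul_left _ (hFcs i)))
  have hG2int : Integrable (fun x => ∑ i, G' x i ^ 2) :=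
    integrable_cc hG2cont (hcs_sum _ _ fun i _ => hcs_sq (hcs_mul_left _ (hGcs i)))
  have hFGint : Integrable (fun x => ∑ i, F' x i * G' x i) := by
    refine integrable_cc (continuous_finset_sum _ fun i _ =>
      (hsτ.mul (hFcont i)).mul (hsτ.mul (hGcont i))) ?_
    exact hcs_sum _ _ fun i _ => hcs_mul_left _ (hcs_mul_left _ (hGcs i))
  have := cs_int hF2cont hG2cont hF2int hG2int hFGint
  rw [int_congr eFG] at this
  rw [int_congr eF2, int_congr eG2] at this
  exact this

lemma weighted_cs' {τ : (Fin d → ℝ) → ℝ} (hτ : Continuous τ) (hτ0 : ∀ x, 0 < τ x)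
    {F G : (Fin d → ℝ) → Fin d → ℝ}
    (hFcont : ∀ i, Continuous fun x => F x i) (hGcont : ∀ i, Continuous fun x => G x i)
    (hFcs : ∀ i, HasCompactSupport fun x => F x i)
    (hGcs : ∀ i, HasCompactSupport fun x => G x i) :
    ∫ x, ∑ i, F x i * G x i
      ≤ Real.sqrt (∫ x, (τ x)⁻¹ * ∑ i, F x i ^ 2)
        * Real.sqrt (∫ x, τ x * ∑ i, G x i ^ 2) := by
  set F' : (Fin d → ℝ) → Fin d → ℝ := fun x i => Real.sqrt ((τ x)⁻¹) * F x i with hF'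
  set G' : (Fin d → ℝ) → Fin d → ℝ := fun x i => Real.sqrt (τ x) * G x i with hG'
  have hτinv : Continuous fun x => (τ x)⁻¹ := hτ.inv₀ fun x => (hτ0 x).ne'
  have hsτ : Continuous fun x => Real.sqrt (τ x) := Real.continuous_sqrt.comp hτ
  have hsτ' : Continuous fun x => Real.sqrt ((τ x)⁻¹) := Real.continuous_sqrt.comp hτinv
  have hss : ∀ x, Real.sqrt ((τ x)⁻¹) * Real.sqrt (τ x) = 1 := by
    intro x
    rw [Real.sqrt_inv]
    exact inv_mul_cancel₀ (ne_of_gt (Real.sqrt_pos.mpr (hτ0 x)))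
  have eF2 : ∀ x, ∑ i, F' x i ^ 2 = (τ x)⁻¹ * ∑ i, F x i ^ 2 := by
    intro x
    rw [Finset.mul_sum]
    refine Finset.sum_congr rfl fun i _ => ?_
    rw [hF', mul_pow, sq, Real.mul_self_sqrt (inv_nonneg.mpr (hτ0 x).le)]
  have eG2 : ∀ x, ∑ i, G' x i ^ 2 = τ x * ∑ i, G x i ^ 2 := by
    intro x
    rw [Finset.mul_sum]
    refine Finset.sum_congr rfl fun i _ => ?_
    rw [hG', mul_pow, sq, Real.mul_self_sqrt (hτ0 x).le]
  have eFG : ∀ x, ∑ i, F' x i * G' x i = ∑ i, F x i * G x i := by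
    intro x
    refine Finset.sum_congr rfl fun i _ => ?_
    rw [hF', hG']
    calc Real.sqrt ((τ x)⁻¹) * F x i * (Real.sqrt (τ x) * G x i)
        = Real.sqrt ((τ x)⁻¹) * Real.sqrt (τ x) * (F x i * G x i) := by ring
      _ = F x i * G x i := by rw [hss x, one_mul]
  have hF2cont : Continuous fun x => ∑ i, F' x i ^ 2 :=
    continuous_finset_sum _ fun i _ => ((hsτ'.mul (hFcont i)).pow 2)
  have hG2cont : Continuous fun x => ∑ i, G' x i ^ 2 :=
    continuous_finset_sum _ fun i _ => ((hsτ.mul (hGcont i)).pow 2)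
  have hF2int : Integrable (fun x => ∑ i, F' x i ^ 2) :=
    integrable_cc hF2cont (hcs_sum _ _ fun i _ => hcs_sq (hcs_mul_left _ (hFcs i)))
  have hG2int : Integrable (fun x => ∑ i, G' x i ^ 2) :=
    integrable_cc hG2cont (hcs_sum _ _ fun i _ => hcs_sq (hcs_mul_left _ (hGcs i)))
  have hFGint : Integrable (fun x => ∑ i, F' x i * G' x i) := by
    refine integrable_cc (continuous_finset_sum _ fun i _ =>
      (hsτ'.mul (hFcont i)).mul (hsτ.mul (hGcont i))) ?_
    exact hcs_sum _ _ fun i _ => hcs_mul_left _ (hcs_mul_left _ (hGcs i))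
  have := cs_int hF2cont hG2cont hF2int hG2int hFGint
  rw [int_congr eFG, int_congr eF2, int_congr eG2] at this
  exact this

lemma kvisc_cs {ν : ℝ} (hν : 0 < ν) {w v : (Fin d → ℝ) → Fin d → ℝ}
    (hw : ContDiff ℝ (⊤ : ℕ∞) w) (hwc : HasCompactSupport w)
    (hv : ContDiff ℝ (⊤ : ℕ∞) v) (hvc : HasCompactSupport v) :
    kvisc ν w v ≤ Real.sqrt (kvisc ν w w) * Real.sqrt (kvisc ν v v) := by
  have hwi : ∀ i, ContDiff ℝ (⊤ : ℕ∞) (fun x => w x i) := fun i => contDiff_comp hw i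
  have hvi : ∀ i, ContDiff ℝ (⊤ : ℕ∞) (fun x => v x i) := fun i => contDiff_comp hv i
  have hcsym : ∀ (u : (Fin d → ℝ) → Fin d → ℝ), ContDiff ℝ (⊤ : ℕ∞) u →
      ∀ i j, Continuous (fun x => symGrad u x i j) := by
    intro u hu i j
    exact (((contDiff_pder (contDiff_comp hu i) j).add
      (contDiff_pder (contDiff_comp hu j) i)).div_const 2).continuous
  have hcssym : ∀ (u : (Fin d → ℝ) → Fin d → ℝ), HasCompactSupport u →
      ∀ i j, HasCompactSupport (fun x => symGrad u x i j) := by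
    intro u hu i j
    have h : (fun x => symGrad u x i j)
        = fun x => (pder (fun y => u y i) j x + pder (fun y => u y j) i x) * (1/2) := by
      funext x
      unfold symGrad
      ring
    rw [h]
    exact hcs_mul_right _ ((hcs_pder (hcs_comp hu i) j).add (hcs_pder (hcs_comp hu j) i))
  set F : (Fin d → ℝ) → Fin d × Fin d → ℝ :=
    fun x p => Real.sqrt (2*ν) * symGrad w x p.1 p.2 with hF
  set G : (Fin d → ℝ) → Fin d × Fin d → ℝ :=
    fun x p => Real.sqrt (2*ν) * symGrad v x p.1 p.2 with hG
  have hss : Real.sqrt (2*ν) * Real.sqrt (2*ν) = 2*ν :=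
    Real.mul_self_sqrt (by linarith)
  have ept : ∀ (u₁ u₂ : (Fin d → ℝ) → Fin d → ℝ) (x : Fin d → ℝ),
      (∑ p : Fin d × Fin d, (Real.sqrt (2*ν) * symGrad u₁ x p.1 p.2)
        * (Real.sqrt (2*ν) * symGrad u₂ x p.1 p.2))
      = ∑ i, ∑ j, 2 * ν * symGrad u₁ x i j * symGrad u₂ x i j := by
    intro u₁ u₂ x
    rw [Fintype.sum_prod_type]
    refine Finset.sum_congr rfl fun i _ => Finset.sum_congr rfl fun j _ => ?_
    calc (Real.sqrt (2*ν) * symGrad u₁ x i j) * (Real.sqrt (2*ν) * symGrad u₂ x i j)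
        = Real.sqrt (2*ν) * Real.sqrt (2*ν) * symGrad u₁ x i j * symGrad u₂ x i j := by ring
      _ = 2 * ν * symGrad u₁ x i j * symGrad u₂ x i j := by rw [hss]
  have eptF : ∀ x, ∑ p : Fin d × Fin d, F x p ^ 2
      = ∑ i, ∑ j, 2 * ν * symGrad w x i j * symGrad w x i j := by
    intro x
    have := ept w w x
    simpa [hF, sq] using this
  have eptG : ∀ x, ∑ p : Fin d × Fin d, G x p ^ 2
      = ∑ i, ∑ j, 2 * ν * symGrad v x i j * symGrad v x i j := by
    intro x
    have := ept v v x
    simpa [hG, sq] using this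
  have hFcont : Continuous fun x => ∑ p : Fin d × Fin d, F x p ^ 2 :=
    continuous_finset_sum _ fun p _ =>
      ((continuous_const.mul (hcsym w hw p.1 p.2)).pow 2)
  have hGcont : Continuous fun x => ∑ p : Fin d × Fin d, G x p ^ 2 :=
    continuous_finset_sum _ fun p _ =>
      ((continuous_const.mul (hcsym v hv p.1 p.2)).pow 2)
  have hFint : Integrable (fun x => ∑ p : Fin d × Fin d, F x p ^ 2) :=
    integrable_cc hFcont (hcs_sum _ _ fun p _ =>
      hcs_sq (hcs_mul_left _ (hcssym w hwc p.1 p.2)))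
  have hGint : Integrable (fun x => ∑ p : Fin d × Fin d, G x p ^ 2) :=
    integrable_cc hGcont (hcs_sum _ _ fun p _ =>
      hcs_sq (hcs_mul_left _ (hcssym v hvc p.1 p.2)))
  have hFGint : Integrable (fun x => ∑ p : Fin d × Fin d, F x p * G x p) := by
    refine integrable_cc (continuous_finset_sum _ fun p _ =>
      (continuous_const.mul (hcsym w hw p.1 p.2)).mul
        (continuous_const.mul (hcsym v hv p.1 p.2))) ?_
    exact hcs_sum _ _ fun p _ => hcs_mul_left _ (hcs_mul_left _ (hcssym v hvc p.1 p.2))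
  have hmain := cs_int hFcont hGcont hFint hGint hFGint
  rw [int_congr (ept w v)] at hmain
  rw [int_congr eptF, int_congr eptG] at hmain
  exact hmain
end WCS

lemma final_algebra {X0 X1 X2 X3 Y1 Y2 c k t1 t2 : ℝ}
    (hX0 : 0 ≤ X0) (hX1 : 0 ≤ X1) (hX2 : 0 ≤ X2) (hX3 : 0 ≤ X3)
    (hY1 : 0 ≤ Y1) (hY2 : 0 ≤ Y2)
    (hc : c ≤ Real.sqrt X3 * Real.sqrt Y2) (hk : k ≤ Real.sqrt X0 * Real.sqrt Y1)
    (ht1 : t1 ≤ Real.sqrt X1 * Real.sqrt Y2) (ht2 : t2 ≤ Real.sqrt X2 * Real.sqrt Y2) :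
    c + k + (t1 + t2) ≤ 3 * Real.sqrt (X0 + X1 + X2 + X3) * Real.sqrt (Y1 + Y2) := by
  have hPnn : (0:ℝ) ≤ Real.sqrt (X0 + X1 + X2 + X3) := Real.sqrt_nonneg _
  have hQnn : (0:ℝ) ≤ Real.sqrt (Y1 + Y2) := Real.sqrt_nonneg _
  have h1 : Real.sqrt X0 * Real.sqrt Y1 + Real.sqrt X1 * Real.sqrt Y2
      ≤ Real.sqrt (X0 + X1) * Real.sqrt (Y1 + Y2) := sqrt_cs2 hX0 hX1 hY1 hY2
  have h2 : Real.sqrt (X0 + X1) ≤ Real.sqrt (X0 + X1 + X2 + X3) :=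
    Real.sqrt_le_sqrt (by linarith)
  have h2' : Real.sqrt (X0 + X1) * Real.sqrt (Y1 + Y2)
      ≤ Real.sqrt (X0 + X1 + X2 + X3) * Real.sqrt (Y1 + Y2) :=
    mul_le_mul_of_nonneg_right h2 hQnn
  have h3 : Real.sqrt X2 * Real.sqrt Y2
      ≤ Real.sqrt (X0 + X1 + X2 + X3) * Real.sqrt (Y1 + Y2) :=
    mul_le_mul (Real.sqrt_le_sqrt (by linarith)) (Real.sqrt_le_sqrt (by linarith))
      (Real.sqrt_nonneg _) hPnn
  have h4 : Real.sqrt X3 * Real.sqrt Y2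
      ≤ Real.sqrt (X0 + X1 + X2 + X3) * Real.sqrt (Y1 + Y2) :=
    mul_le_mul (Real.sqrt_le_sqrt (by linarith)) (Real.sqrt_le_sqrt (by linarith))
      (Real.sqrt_nonneg _) hPnn
  nlinarith [h1, h2', h3, h4]


/-- continuity of the reduced Oseen form (Lemma 5, concrete form). -/
theorem oseen_continuity (hd : 1 ≤ d) (ν : ℝ) (hν : 0 < ν)
    (a : (Fin d → ℝ) → Fin d → ℝ) (ha : ContDiff ℝ (⊤ : ℕ∞) a) (hdiva : ∀ x, vdiv a x = 0)
    (τ : (Fin d → ℝ) → ℝ) (hτ : Continuous τ) (hτ0 : ∀ x, 0 < τ x)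
    (w : (Fin d → ℝ) → Fin d → ℝ) (hw : ContDiff ℝ (⊤ : ℕ∞) w) (hwc : HasCompactSupport w)
    (hdivw : ∀ x, vdiv w x = 0)
    (v : (Fin d → ℝ) → Fin d → ℝ) (hv : ContDiff ℝ (⊤ : ℕ∞) v) (hvc : HasCompactSupport v)
    (hdivv : ∀ x, vdiv v x = 0)
    (r : (Fin d → ℝ) → ℝ) (hr : ContDiff ℝ (⊤ : ℕ∞) r) (hrc : HasCompactSupport r)
    (q : (Fin d → ℝ) → ℝ) (hq : ContDiff ℝ (⊤ : ℕ∞) q) (hqc : HasCompactSupport q) :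
    Ared ν a τ w r v q ≤ 3 * tnormPlus ν a τ w r * tnorm ν a τ v q := by
  have hwi : ∀ i, ContDiff ℝ (⊤ : ℕ∞) (fun x => w x i) := fun i => contDiff_comp hw i
  have hvi : ∀ i, ContDiff ℝ (⊤ : ℕ∞) (fun x => v x i) := fun i => contDiff_comp hv i
  have hai : ∀ j, ContDiff ℝ (⊤ : ℕ∞) (fun x => a x j) := fun j => contDiff_comp ha j
  -- continuity and compact support of the basic blocks
  have hadvw_cont : ∀ i, Continuous fun x => adv a w x i := fun i =>
    continuous_finset_sum _ fun j _ =>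
      (hai j).continuous.mul (contDiff_pder (hwi i) j).continuous
  have hadvv_cont : ∀ i, Continuous fun x => adv a v x i := fun i =>
    continuous_finset_sum _ fun j _ =>
      (hai j).continuous.mul (contDiff_pder (hvi i) j).continuous
  have hadvw_cs : ∀ i, HasCompactSupport fun x => adv a w x i := fun i =>
    hcs_sum _ _ fun j _ => hcs_mul_left _ (hcs_pder (hcs_comp hwc i) j)
  have hadvv_cs : ∀ i, HasCompactSupport fun x => adv a v x i := fun i =>
    hcs_sum _ _ fun j _ => hcs_mul_left _ (hcs_pder (hcs_comp hvc i) j)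
  have hgrdr_cont : ∀ i, Continuous fun x => grd r x i := fun i =>
    (contDiff_pder hr i).continuous
  have hgrdq_cont : ∀ i, Continuous fun x => grd q x i := fun i =>
    (contDiff_pder hq i).continuous
  have hgrdr_cs : ∀ i, HasCompactSupport fun x => grd r x i := fun i => hcs_pder hrc i
  have hgrdq_cs : ∀ i, HasCompactSupport fun x => grd q x i := fun i => hcs_pder hqc i
  have hsg : ∀ i j, ContDiff ℝ (⊤ : ℕ∞) (fun y => 2 * ν * symGrad w y i j) := fun i j =>
    contDiff_const.mul
      (((contDiff_pder (hwi i) j).add (contDiff_pder (hwi j) i)).div_const 2)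
  have hsg_cs : ∀ i j, HasCompactSupport (fun y => 2 * ν * symGrad w y i j) := by
    intro i j
    refine hcs_mul_left _ ?_
    have h : (fun x => symGrad w x i j)
        = fun x => (pder (fun y => w y i) j x + pder (fun y => w y j) i x) * (1/2) := by
      funext x; unfold symGrad; ring
    rw [h]
    exact hcs_mul_right _ ((hcs_pder (hcs_comp hwc i) j).add (hcs_pder (hcs_comp hwc j) i))
  have hdv_cont : ∀ i, Continuous fun x => divVisc ν w x i := fun i =>
    continuous_finset_sum _ fun j _ => (contDiff_pder (hsg i j) j).continuous
  have hdv_cs : ∀ i, HasCompactSupport fun x => divVisc ν w x i := fun i =>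
    hcs_sum _ _ fun j _ => hcs_pder (hsg_cs i j) j
  -- combined fields
  have hG_cont : ∀ i, Continuous fun x => adv a v x i + grd q x i := fun i =>
    (hadvv_cont i).add (hgrdq_cont i)
  have hG_cs : ∀ i, HasCompactSupport fun x => adv a v x i + grd q x i := fun i =>
    (hadvv_cs i).add (hgrdq_cs i)
  have hFwr_cont : ∀ i, Continuous fun x => adv a w x i + grd r x i := fun i =>
    (hadvw_cont i).add (hgrdr_cont i)
  have hFwr_cs : ∀ i, HasCompactSupport fun x => adv a w x i + grd r x i := fun i =>
    (hadvw_cs i).add (hgrdr_cs i)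
  -- nonnegativity of the six building blocks
  have hX0 : 0 ≤ kvisc ν w w := by
    refine integral_nonneg fun x => Finset.sum_nonneg fun i _ =>
      Finset.sum_nonneg fun j _ => ?_
    nlinarith [sq_nonneg (symGrad w x i j), hν.le]
  have hY1 : 0 ≤ kvisc ν v v := by
    refine integral_nonneg fun x => Finset.sum_nonneg fun i _ =>
      Finset.sum_nonneg fun j _ => ?_
    nlinarith [sq_nonneg (symGrad v x i j), hν.le]
  have hX1 : 0 ≤ ∫ x, τ x * ∑ i, (adv a w x i + grd r x i) ^ 2 :=
    integral_nonneg fun x => mul_nonneg (hτ0 x).le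
      (Finset.sum_nonneg fun i _ => sq_nonneg _)
  have hX2 : 0 ≤ ∫ x, τ x * ∑ i, (divVisc ν w x i) ^ 2 :=
    integral_nonneg fun x => mul_nonneg (hτ0 x).le
      (Finset.sum_nonneg fun i _ => sq_nonneg _)
  have hX3 : 0 ≤ ∫ x, (τ x)⁻¹ * ∑ i, (w x i) ^ 2 :=
    integral_nonneg fun x => mul_nonneg (inv_nonneg.mpr (hτ0 x).le)
      (Finset.sum_nonneg fun i _ => sq_nonneg _)
  have hY2 : 0 ≤ ∫ x, τ x * ∑ i, (adv a v x i + grd q x i) ^ 2 :=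
    integral_nonneg fun x => mul_nonneg (hτ0 x).le
      (Finset.sum_nonneg fun i _ => sq_nonneg _)
  -- (1) viscous bound
  have hkb : kvisc ν w v ≤ Real.sqrt (kvisc ν w w) * Real.sqrt (kvisc ν v v) :=
    kvisc_cs hν hw hwc hv hvc
  -- (2) split of the stabilization term
  have hint1 : Integrable (fun x =>
      τ x * ∑ i, (adv a w x i + grd r x i) * (adv a v x i + grd q x i)) := by
    refine integrable_cc (hτ.mul (continuous_finset_sum _ fun i _ =>
      (hFwr_cont i).mul (hG_cont i))) ?_
    exact hcs_mul_left _ (hcs_sum _ _ fun i _ => hcs_mul_left _ (hG_cs i))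
  have hint2 : Integrable (fun x =>
      τ x * ∑ i, (-(divVisc ν w x i)) * (adv a v x i + grd q x i)) := by
    refine integrable_cc (hτ.mul (continuous_finset_sum _ fun i _ =>
      (hdv_cont i).neg.mul (hG_cont i))) ?_
    exact hcs_mul_left _ (hcs_sum _ _ fun i _ => hcs_mul_left _ (hG_cs i))
  have hsplit : (∫ x, τ x * ∑ i,
        (adv a w x i - divVisc ν w x i + grd r x i) * (adv a v x i + grd q x i))
      = (∫ x, τ x * ∑ i, (adv a w x i + grd r x i) * (adv a v x i + grd q x i))
        + ∫ x, τ x * ∑ i, (-(divVisc ν w x i)) * (adv a v x i + grd q x i) := by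
    rw [← integral_add hint1 hint2]
    refine int_congr fun x => ?_
    rw [← mul_add, ← Finset.sum_add_distrib]
    congr 1
    exact Finset.sum_congr rfl fun i _ => by ring
  -- (3) bound of the first stabilization piece
  have hT1 : (∫ x, τ x * ∑ i, (adv a w x i + grd r x i) * (adv a v x i + grd q x i))
      ≤ Real.sqrt (∫ x, τ x * ∑ i, (adv a w x i + grd r x i) ^ 2)
        * Real.sqrt (∫ x, τ x * ∑ i, (adv a v x i + grd q x i) ^ 2) :=
    weighted_cs hτ hτ0 hFwr_cont hG_cont hFwr_cs hG_cs
  -- (4) bound of the second stabilization piece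
  have hT2 : (∫ x, τ x * ∑ i, (-(divVisc ν w x i)) * (adv a v x i + grd q x i))
      ≤ Real.sqrt (∫ x, τ x * ∑ i, (divVisc ν w x i) ^ 2)
        * Real.sqrt (∫ x, τ x * ∑ i, (adv a v x i + grd q x i) ^ 2) := by
    have h := weighted_cs (F := fun x i => -(divVisc ν w x i))
      (G := fun x i => adv a v x i + grd q x i) hτ hτ0
      (fun i => (hdv_cont i).neg) hG_cont (fun i => hcs_neg (hdv_cs i)) hG_cs
    have e : (∫ x, τ x * ∑ i, (-(divVisc ν w x i)) ^ 2)
        = ∫ x, τ x * ∑ i, (divVisc ν w x i) ^ 2 := by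
      refine int_congr fun x => ?_
      congr 1
      exact Finset.sum_congr rfl fun i _ => by ring
    rw [e] at h
    exact h
  -- (5) convection bound
  have hzero : ∫ x, ∑ i, w x i * grd q x i = 0 :=
    integral_dot_grad_eq_zero hw hwc hdivw hq hqc
  have hswap : convc a w v = - ∫ x, ∑ i, w x i * adv a v x i :=
    conv_swap ha hdiva hw hwc hv hvc
  have hIwa : Integrable (fun x => ∑ i, -(w x i * adv a v x i)) := by
    refine integrable_cc (continuous_finset_sum _ fun i _ =>
      ((hwi i).continuous.mul (hadvv_cont i)).neg) ?_
    exact hcs_sum _ _ fun i _ => hcs_neg (hcs_mul_left _ (hadvv_cs i))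
  have hIwg : Integrable (fun x => ∑ i, -(w x i * grd q x i)) := by
    refine integrable_cc (continuous_finset_sum _ fun i _ =>
      ((hwi i).continuous.mul (hgrdq_cont i)).neg) ?_
    exact hcs_sum _ _ fun i _ => hcs_neg (hcs_mul_left _ (hgrdq_cs i))
  have hconv_eq : convc a w v
      = ∫ x, ∑ i, (-(w x i)) * (adv a v x i + grd q x i) := by
    have e : ∀ x, ∑ i, (-(w x i)) * (adv a v x i + grd q x i)
        = (∑ i, -(w x i * adv a v x i)) + ∑ i, -(w x i * grd q x i) := by
      intro x
      rw [← Finset.sum_add_distrib]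
      exact Finset.sum_congr rfl fun i _ => by ring
    have e2 : (fun x => ∑ i, -(w x i * adv a v x i))
        = fun x => -(∑ i, w x i * adv a v x i) := funext fun x => Finset.sum_neg_distrib _
    have e3 : (fun x => ∑ i, -(w x i * grd q x i))
        = fun x => -(∑ i, w x i * grd q x i) := funext fun x => Finset.sum_neg_distrib _
    rw [hswap, int_congr e, integral_add hIwa hIwg]
    rw [e2, e3, integral_neg, integral_neg, hzero, neg_zero, add_zero]
  have hCb : convc a w v
      ≤ Real.sqrt (∫ x, (τ x)⁻¹ * ∑ i, (w x i) ^ 2)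
        * Real.sqrt (∫ x, τ x * ∑ i, (adv a v x i + grd q x i) ^ 2) := by
    have h := weighted_cs' (F := fun x i => -(w x i))
      (G := fun x i => adv a v x i + grd q x i) hτ hτ0
      (fun i => (hwi i).continuous.neg) hG_cont
      (fun i => hcs_neg (hcs_comp hwc i)) hG_cs
    have e : (∫ x, (τ x)⁻¹ * ∑ i, (-(w x i)) ^ 2)
        = ∫ x, (τ x)⁻¹ * ∑ i, (w x i) ^ 2 := by
      refine int_congr fun x => ?_
      congr 1
      exact Finset.sum_congr rfl fun i _ => by ring
    rw [e] at h
    rw [hconv_eq]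
    exact h
  -- assembly
  have hA : Ared ν a τ w r v q = convc a w v + kvisc ν w v
      + ((∫ x, τ x * ∑ i, (adv a w x i + grd r x i) * (adv a v x i + grd q x i))
        + ∫ x, τ x * ∑ i, (-(divVisc ν w x i)) * (adv a v x i + grd q x i)) := by
    unfold Ared
    rw [hsplit]
  have hPdef : tnormPlus ν a τ w r = Real.sqrt
      (kvisc ν w w + (∫ x, τ x * ∑ i, (adv a w x i + grd r x i) ^ 2)
        + (∫ x, τ x * ∑ i, (divVisc ν w x i) ^ 2)
        + ∫ x, (τ x)⁻¹ * ∑ i, (w x i) ^ 2) := by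
    unfold tnormPlus tnormPlusSq tnormSq
    rfl
  have hQdef : tnorm ν a τ v q = Real.sqrt
      (kvisc ν v v + ∫ x, τ x * ∑ i, (adv a v x i + grd q x i) ^ 2) := by
    unfold tnorm tnormSq
    rfl
  rw [hA, hPdef, hQdef]
  exact final_algebra hX0 hX1 hX2 hX3 hY1 hY2 hCb hkb hT1 hT2
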